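/- Let N ≥ 2, T ≥ 1, and K ≥ N − 2, and let data points x₁ < x₂ < ⋯ < x_N in ℝ and labels y₁, …, y_N ∈ ℝ^T be given. Then every parameter set θ attaining the minimum of problem (P) satisfies f_θ(x) = f_D(x) for all x ∈ (−∞, x₂] and all x ∈ [x_{N−1}, ∞); in particular, every optimal interpolant agrees with the connect-the-dots interpolant before the second data point and after the second-to-last data point. -/

import Mathlib

/-!
Shallow univariate (input dimension 1) ReLU networks with `T` outputs,
width `K`, input weights `w k ∈ {−1, +1}`, and a residual connection.
-/

open scoped BigOperators
open Finset

noncomputable section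

/-- Parameters of a width-`K`, `T`-output shallow ReLU network with residual
connection, whose input weights are constrained to `{−1, +1}`. -/
structure ReLUParams (T K : ℕ) where
  v : Fin K → EuclideanSpace ℝ (Fin T)
  w : Fin K → ℝ
  b : Fin K → ℝ
  A : EuclideanSpace ℝ (Fin T)
  c : EuclideanSpace ℝ (Fin T)
  hw : ∀ k, w k = 1 ∨ w k = -1

/-- The network function `f_θ(x) = ∑ₖ vₖ (wₖ x + bₖ)₊ + A x + c`. -/
def nnFun {T K : ℕ} (θ : ReLUParams T K) (x : ℝ) : EuclideanSpace ℝ (Fin T) :=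
  (∑ k : Fin K, max (θ.w k * x + θ.b k) 0 • θ.v k) + x • θ.A + θ.c

/-- The objective of problem (P): `∑ₖ ‖vₖ‖₂`. -/
def cost {T K : ℕ} (θ : ReLUParams T K) : ℝ := ∑ k : Fin K, ‖θ.v k‖

/-- Slope vector `sᵢ = (y_{i+1} − yᵢ)/(x_{i+1} − xᵢ)` (0-indexed). -/
def slopeVec {T : ℕ} (x : ℕ → ℝ) (y : ℕ → EuclideanSpace ℝ (Fin T)) (i : ℕ) :
    EuclideanSpace ℝ (Fin T) :=
  (x (i + 1) - x i)⁻¹ • (y (i + 1) - y i)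

/-- The connect-the-dots interpolant `f_D` of the data
`(x 0, y 0), …, (x (N-1), y (N-1))` (0-indexed): it interpolates the data, is
affine on each interval `[xᵢ, x_{i+1}]`, is affine with slopeVec `s 0` on
`(−∞, x 0]` and affine with slopeVec `s (N-2)` on `[x (N-1), ∞)`. -/
def ctd {T : ℕ} (N : ℕ) (x : ℕ → ℝ) (y : ℕ → EuclideanSpace ℝ (Fin T)) (t : ℝ) :
    EuclideanSpace ℝ (Fin T) :=
  y 0 + (t - x 0) • slopeVec x y 0 +
    ∑ i ∈ Finset.Ico 1 (N - 1), max (t - x i) 0 • (slopeVec x y i - slopeVec x y (i - 1))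

/-- Feasibility for problem (P): the network interpolates the data. -/
def Interpolates {T K : ℕ} (N : ℕ) (x : ℕ → ℝ) (y : ℕ → EuclideanSpace ℝ (Fin T))
    (θ : ReLUParams T K) : Prop :=
  ∀ i < N, nnFun θ (x i) = y i

/-- `θ` attains the minimum of problem (P). -/
def IsMinimizer {T K : ℕ} (N : ℕ) (x : ℕ → ℝ) (y : ℕ → EuclideanSpace ℝ (Fin T))
    (θ : ReLUParams T K) : Prop :=
  Interpolates N x y θ ∧ ∀ θ' : ReLUParams T K, Interpolates N x y θ' → cost θ ≤ cost θ'


lemma relu_convexOn (w b : ℝ) : ConvexOn ℝ Set.univ (fun t : ℝ => max (w * t + b) 0) := by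
  have h1 : ConvexOn ℝ Set.univ (fun t : ℝ => w * t + b) := by
    refine ⟨convex_univ, ?_⟩
    intro p _ q _ a a' ha ha' hab
    apply le_of_eq
    simp only [smul_eq_mul]
    linear_combination (-b) * hab
  have h2 : ConvexOn ℝ Set.univ (fun _ : ℝ => (0:ℝ)) := convexOn_const 0 convex_univ
  exact h1.sup h2

lemma lower_bound {T K : ℕ} (M : ℕ) (z : ℕ → ℝ) (hz : ∀ i, i + 1 < M → z i < z (i + 1))
    (θ : ReLUParams T K) :
    ∑ i ∈ Finset.range (M - 2),
      ‖slopeVec z (fun j => nnFun θ (z j)) (i + 1) -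
        slopeVec z (fun j => nnFun θ (z j)) i‖ ≤ cost θ := by
  classical
  set δ : ℕ → Fin K → ℝ := fun i k =>
    (max (θ.w k * z (i+1) + θ.b k) 0 - max (θ.w k * z i + θ.b k) 0) / (z (i+1) - z i) with hδ
  have slope_eq : ∀ i, i + 1 < M →
      slopeVec z (fun j => nnFun θ (z j)) i = (∑ k, δ i k • θ.v k) + θ.A := by
    intro i hi
    have hΔ : z (i+1) - z i ≠ 0 := sub_ne_zero.2 (hz i hi).ne'
    rw [slopeVec, inv_smul_eq_iff₀ hΔ]
    have expand : nnFun θ (z (i+1)) - nnFun θ (z i)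
        = (∑ k, (max (θ.w k * z (i+1) + θ.b k) 0 - max (θ.w k * z i + θ.b k) 0) • θ.v k)
          + (z (i+1) - z i) • θ.A := by
      simp only [nnFun, sub_smul, Finset.sum_sub_distrib]
      abel
    rw [expand, smul_add, Finset.smul_sum]
    congr 1
    refine Finset.sum_congr rfl fun k _ => ?_
    rw [smul_smul]
    congr 1
    simp only [hδ]
    field_simp
  have hbd : ∀ i, i + 1 < M → ∀ k : Fin K,
      (θ.w k = 1 → 0 ≤ δ i k ∧ δ i k ≤ 1) ∧ (θ.w k = -1 → -1 ≤ δ i k ∧ δ i k ≤ 0) := by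
    intro i hi k
    have hΔ : (0:ℝ) < z (i+1) - z i := sub_pos.2 (hz i hi)
    have lip : |max (θ.w k * z (i+1) + θ.b k) 0 - max (θ.w k * z i + θ.b k) 0|
        ≤ |(θ.w k * z (i+1) + θ.b k) - (θ.w k * z i + θ.b k)| :=
      abs_max_sub_max_le_abs _ _ 0
    constructor
    · intro hw
      simp only [hδ]
      rw [hw]
      rw [hw] at lip
      have harg : z i + θ.b k ≤ z (i+1) + θ.b k := by linarith
      have hnum0 : 0 ≤ max (1 * z (i+1) + θ.b k) 0 - max (1 * z i + θ.b k) 0 := by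
        simp only [one_mul]
        have := max_le_max harg (le_refl (0:ℝ))
        linarith
      have habs : |(1 * z (i+1) + θ.b k) - (1 * z i + θ.b k)| = z (i+1) - z i := by
        rw [abs_of_nonneg (by linarith)]; ring
      rw [habs] at lip
      have hnum1 : max (1 * z (i+1) + θ.b k) 0 - max (1 * z i + θ.b k) 0 ≤ z (i+1) - z i := by
        have := le_abs_self (max (1 * z (i+1) + θ.b k) 0 - max (1 * z i + θ.b k) 0)
        linarith
      constructor
      · exact div_nonneg hnum0 hΔ.le
      · rw [div_le_one hΔ]
        exact hnum1
    · intro hw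
      simp only [hδ]
      rw [hw]
      rw [hw] at lip
      have harg : -1 * z (i+1) + θ.b k ≤ -1 * z i + θ.b k := by linarith
      have hnum0 : max (-1 * z (i+1) + θ.b k) 0 - max (-1 * z i + θ.b k) 0 ≤ 0 := by
        have := max_le_max harg (le_refl (0:ℝ))
        linarith
      have habs : |(-1 * z (i+1) + θ.b k) - (-1 * z i + θ.b k)| = z (i+1) - z i := by
        rw [abs_of_nonpos (by linarith)]; ring
      rw [habs] at lip
      have hnum1 : -(z (i+1) - z i) ≤ max (-1 * z (i+1) + θ.b k) 0 - max (-1 * z i + θ.b k) 0 := by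
        have := neg_abs_le (max (-1 * z (i+1) + θ.b k) 0 - max (-1 * z i + θ.b k) 0)
        linarith
      constructor
      · rw [le_div_iff₀ hΔ]
        linarith
      · exact div_nonpos_of_nonpos_of_nonneg hnum0 hΔ.le
  have key : ∀ k : Fin K, ∑ i ∈ Finset.range (M - 2), |δ (i+1) k - δ i k| ≤ 1 := by
    intro k
    rcases le_or_gt M 2 with hM | hM
    · have : M - 2 = 0 := by omega
      simp [this]
    · have hmono : ∀ i, i + 2 < M → δ i k ≤ δ (i+1) k := by
        intro i hi
        have h1 : z i < z (i+1) := hz i (by omega)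
        have h2 : z (i+1) < z (i+2) := hz (i+1) (by omega)
        have := (relu_convexOn (θ.w k) (θ.b k)).slope_mono_adjacent
          (Set.mem_univ (z i)) (Set.mem_univ (z (i+2))) h1 h2
        simpa [hδ] using this
      have htel : ∑ i ∈ Finset.range (M - 2), |δ (i+1) k - δ i k| = δ (M-2) k - δ 0 k := by
        have hcongr : ∀ i ∈ Finset.range (M - 2), |δ (i+1) k - δ i k| = δ (i+1) k - δ i k := by
          intro i hi
          rw [Finset.mem_range] at hi
          have := hmono i (by omega)
          rw [abs_of_nonneg]; linarith
        rw [Finset.sum_congr rfl hcongr, Finset.sum_range_sub (fun i => δ i k)]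
      rw [htel]
      have hb1 := hbd (M - 2) (by omega) k
      have hb2 := hbd 0 (by omega) k
      rcases θ.hw k with h | h
      · have a1 := (hb1.1 h).2
        have a2 := (hb2.1 h).1
        linarith
      · have a1 := (hb1.2 h).2
        have a2 := (hb2.2 h).1
        linarith
  calc ∑ i ∈ Finset.range (M - 2),
      ‖slopeVec z (fun j => nnFun θ (z j)) (i + 1) - slopeVec z (fun j => nnFun θ (z j)) i‖
      ≤ ∑ i ∈ Finset.range (M - 2), ∑ k : Fin K, |δ (i+1) k - δ i k| * ‖θ.v k‖ := by
        refine Finset.sum_le_sum fun i hi => ?_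
        rw [Finset.mem_range] at hi
        rw [slope_eq (i+1) (by omega), slope_eq i (by omega)]
        have hdiff : (∑ k, δ (i+1) k • θ.v k) + θ.A - ((∑ k, δ i k • θ.v k) + θ.A)
            = ∑ k, (δ (i+1) k - δ i k) • θ.v k := by
          simp only [sub_smul, Finset.sum_sub_distrib]
          abel
        rw [hdiff]
        refine (norm_sum_le _ _).trans ?_
        refine Finset.sum_le_sum fun k _ => ?_
        rw [norm_smul, Real.norm_eq_abs]
    _ = ∑ k : Fin K, ∑ i ∈ Finset.range (M - 2), |δ (i+1) k - δ i k| * ‖θ.v k‖ :=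
        Finset.sum_comm
    _ ≤ ∑ k : Fin K, ‖θ.v k‖ := by
        refine Finset.sum_le_sum fun k _ => ?_
        rw [← Finset.sum_mul]
        calc (∑ i ∈ Finset.range (M - 2), |δ (i+1) k - δ i k|) * ‖θ.v k‖
            ≤ 1 * ‖θ.v k‖ := mul_le_mul_of_nonneg_right (key k) (norm_nonneg _)
          _ = ‖θ.v k‖ := one_mul _
    _ = cost θ := rfl


lemma slope_step {T : ℕ} (x : ℕ → ℝ) (y : ℕ → EuclideanSpace ℝ (Fin T)) (i : ℕ)
    (h : x i < x (i + 1)) : (x (i + 1) - x i) • slopeVec x y i = y (i + 1) - y i := by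
  rw [slopeVec, smul_inv_smul₀ (sub_ne_zero.2 h.ne')]

lemma x_mono {N : ℕ} {x : ℕ → ℝ} (hx : ∀ i, i + 1 < N → x i < x (i + 1)) :
    ∀ i j, i ≤ j → j < N → x i ≤ x j := by
  intro i j hij hj
  induction j with
  | zero =>
    have : i = 0 := by omega
    simp [this]
  | succ j ih =>
    rcases Nat.lt_or_ge i (j + 1) with h | h
    · exact le_trans (ih (by omega) (by omega)) (hx j (by omega)).le
    · have : i = j + 1 := by omega
      simp [this]

lemma ctd_partial {T : ℕ} (N : ℕ) (hN : 2 ≤ N) (x : ℕ → ℝ) (y : ℕ → EuclideanSpace ℝ (Fin T))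
    (hx : ∀ i, i + 1 < N → x i < x (i + 1)) :
    ∀ j, j ≤ N - 2 → ∀ t : ℝ, x j ≤ t →
      ctd N x y t = y j + (t - x j) • slopeVec x y j +
        ∑ i ∈ Finset.Ico (j + 1) (N - 1),
          max (t - x i) 0 • (slopeVec x y i - slopeVec x y (i - 1)) := by
  intro j
  induction j with
  | zero => intro _ t _; rfl
  | succ j ih =>
    intro hj t ht
    have hxj : x j < x (j + 1) := hx j (by omega)
    rw [ih (by omega) t (le_trans hxj.le ht)]
    rw [Finset.sum_eq_sum_Ico_succ_bot (by omega : j + 1 < N - 1)]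
    rw [max_eq_left (by linarith : (0:ℝ) ≤ t - x (j + 1))]
    have hsplit : (t - x j) • slopeVec x y j
        = (y (j + 1) - y j) + (t - x (j + 1)) • slopeVec x y j := by
      rw [← slope_step x y j hxj, ← add_smul]
      congr 1
      ring
    simp only [Nat.add_sub_cancel]
    rw [hsplit, smul_sub]
    abel

lemma ctd_interp {T N : ℕ} (hN : 2 ≤ N) (x : ℕ → ℝ) (y : ℕ → EuclideanSpace ℝ (Fin T))
    (hx : ∀ i, i + 1 < N → x i < x (i + 1)) :
    ∀ i, i < N → ctd N x y (x i) = y i := by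
  intro i hi
  rcases Nat.lt_or_ge i (N - 1) with h | h
  · rw [ctd_partial N hN x y hx i (by omega) (x i) le_rfl]
    have hz : ∀ m ∈ Finset.Ico (i + 1) (N - 1),
        max (x i - x m) 0 • (slopeVec x y m - slopeVec x y (m - 1)) = 0 := by
      intro m hm
      rw [Finset.mem_Ico] at hm
      have : x i ≤ x m := x_mono hx i m (by omega) (by omega)
      rw [max_eq_right (by linarith), zero_smul]
    rw [Finset.sum_eq_zero hz]
    simp
  · have hi' : i = N - 1 := by omega
    subst hi'
    rw [ctd_partial N hN x y hx (N - 2) le_rfl (x (N - 1))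
      (x_mono hx (N - 2) (N - 1) (by omega) (by omega))]
    have h21 : N - 2 + 1 = N - 1 := by omega
    rw [h21, Finset.Ico_self, Finset.sum_empty]
    have hstep := slope_step x y (N - 2) (hx (N - 2) (by omega))
    rw [h21] at hstep
    rw [hstep]
    abel

lemma ctd_left {T N : ℕ} (hN : 2 ≤ N) (x : ℕ → ℝ) (y : ℕ → EuclideanSpace ℝ (Fin T))
    (hx : ∀ i, i + 1 < N → x i < x (i + 1)) {t : ℝ} (ht : t ≤ x 1) :
    ctd N x y t = y 0 + (t - x 0) • slopeVec x y 0 := by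
  rw [ctd]
  rw [Finset.sum_eq_zero, add_zero]
  intro m hm
  rw [Finset.mem_Ico] at hm
  have : x 1 ≤ x m := x_mono hx 1 m hm.1 (by omega)
  rw [max_eq_right (by linarith), zero_smul]

lemma ctd_right {T N : ℕ} (hN : 2 ≤ N) (x : ℕ → ℝ) (y : ℕ → EuclideanSpace ℝ (Fin T))
    (hx : ∀ i, i + 1 < N → x i < x (i + 1)) {t : ℝ} (ht : x (N - 2) ≤ t) :
    ctd N x y t = y (N - 2) + (t - x (N - 2)) • slopeVec x y (N - 2) := by
  rw [ctd_partial N hN x y hx (N - 2) le_rfl t ht]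
  have h21 : N - 2 + 1 = N - 1 := by omega
  rw [h21, Finset.Ico_self, Finset.sum_empty, add_zero]

def ctdParams {T K : ℕ} (N : ℕ) (x : ℕ → ℝ) (y : ℕ → EuclideanSpace ℝ (Fin T)) :
    ReLUParams T K where
  v k := if (k : ℕ) < N - 2 then slopeVec x y ((k : ℕ) + 1) - slopeVec x y (k : ℕ) else 0
  w _ := 1
  b k := -(x ((k : ℕ) + 1))
  A := slopeVec x y 0
  c := y 0 - x 0 • slopeVec x y 0
  hw _ := Or.inl rfl

lemma ctdParams_fun {T K N : ℕ} (hN : 2 ≤ N) (hK : N - 2 ≤ K) (x : ℕ → ℝ)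
    (y : ℕ → EuclideanSpace ℝ (Fin T)) (t : ℝ) :
    nnFun (ctdParams (K := K) N x y) t = ctd N x y t := by
  rw [nnFun, ctd]
  have h1 : ∑ k : Fin K, max ((ctdParams (K := K) N x y).w k * t + (ctdParams (K := K) N x y).b k) 0
        • (ctdParams (K := K) N x y).v k
      = ∑ i ∈ Finset.Ico 1 (N - 1), max (t - x i) 0 • (slopeVec x y i - slopeVec x y (i - 1)) := by
    calc ∑ k : Fin K, max ((ctdParams (K := K) N x y).w k * t + (ctdParams (K := K) N x y).b k) 0
          • (ctdParams (K := K) N x y).v k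
        = ∑ j ∈ Finset.range K, max (t - x (j + 1)) 0 •
            (if j < N - 2 then slopeVec x y (j + 1) - slopeVec x y j else 0) := by
          rw [← Fin.sum_univ_eq_sum_range]
          refine Finset.sum_congr rfl fun k _ => ?_
          simp only [ctdParams, one_mul, sub_eq_add_neg]
      _ = ∑ j ∈ Finset.range (N - 2), max (t - x (j + 1)) 0 •
            (slopeVec x y (j + 1) - slopeVec x y j) := by
          rw [← Finset.sum_subset (Finset.range_subset_range.2 hK)]
          · refine Finset.sum_congr rfl fun j hj => ?_
            rw [Finset.mem_range] at hj
            rw [if_pos hj]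
          · intro j _ hj
            rw [Finset.mem_range] at hj
            rw [if_neg hj, smul_zero]
      _ = ∑ i ∈ Finset.Ico 1 (N - 1), max (t - x i) 0 •
            (slopeVec x y i - slopeVec x y (i - 1)) := by
          rw [Finset.sum_Ico_eq_sum_range]
          have e : N - 1 - 1 = N - 2 := by omega
          rw [e]
          refine Finset.sum_congr rfl fun j _ => ?_
          have e1 : 1 + j = j + 1 := by omega
          rw [e1]
          simp
  rw [h1]
  simp only [ctdParams]
  rw [sub_smul]
  abel

lemma ctdParams_cost {T K N : ℕ} (hK : N - 2 ≤ K) (x : ℕ → ℝ)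
    (y : ℕ → EuclideanSpace ℝ (Fin T)) :
    cost (ctdParams (K := K) N x y)
      = ∑ i ∈ Finset.range (N - 2), ‖slopeVec x y (i + 1) - slopeVec x y i‖ := by
  rw [cost]
  calc ∑ k : Fin K, ‖(ctdParams (K := K) N x y).v k‖
      = ∑ j ∈ Finset.range K,
          ‖if j < N - 2 then slopeVec x y (j + 1) - slopeVec x y j else 0‖ := by
        rw [← Fin.sum_univ_eq_sum_range]
        refine Finset.sum_congr rfl fun k _ => ?_
        simp only [ctdParams]
    _ = ∑ j ∈ Finset.range (N - 2), ‖slopeVec x y (j + 1) - slopeVec x y j‖ := by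
        rw [← Finset.sum_subset (Finset.range_subset_range.2 hK)]
        · refine Finset.sum_congr rfl fun j hj => ?_
          rw [Finset.mem_range] at hj
          rw [if_pos hj]
        · intro j _ hj
          rw [Finset.mem_range] at hj
          rw [if_neg hj, norm_zero]


lemma eq_of_norm_le_zero {T : ℕ} {a b : EuclideanSpace ℝ (Fin T)} (h : ‖a - b‖ ≤ 0) : a = b := by
  have : ‖a - b‖ = 0 := le_antisymm h (norm_nonneg _)
  exact sub_eq_zero.1 (norm_eq_zero.1 this)

lemma case_leftExt {T K N : ℕ} {x : ℕ → ℝ} {y : ℕ → EuclideanSpace ℝ (Fin T)} (hN : 2 ≤ N)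
    (hx : ∀ i, i + 1 < N → x i < x (i + 1)) (θ : ReLUParams T K)
    (hint : Interpolates N x y θ)
    (hcost : cost θ ≤ ∑ i ∈ Finset.range (N - 2), ‖slopeVec x y (i + 1) - slopeVec x y i‖)
    {t : ℝ} (ht : t < x 0) :
    nnFun θ t = y 0 + (t - x 0) • slopeVec x y 0 := by
  set z : ℕ → ℝ := fun i => if i = 0 then t else x (i - 1) with hzdef
  have hz : ∀ i, i + 1 < N + 1 → z i < z (i + 1) := by
    intro i hi
    match i with
    | 0 => simpa [hzdef] using ht
    | m + 1 => simpa [hzdef] using hx m (by omega)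
  have key := lower_bound (N + 1) z hz θ
  have hNr : N + 1 - 2 = N - 2 + 1 := by omega
  rw [hNr] at key
  simp only [Finset.sum_range_succ', zero_add] at key
  have hSsucc : ∀ i, i + 1 < N →
      slopeVec z (fun j => nnFun θ (z j)) (i + 1) = slopeVec x y i := by
    intro i hi
    have e1 : z (i + 1) = x i := by simp [hzdef]
    have e2 : z (i + 1 + 1) = x (i + 1) := by simp [hzdef]
    simp only [slopeVec, e1, e2, hint (i + 1) hi, hint i (by omega)]
  have hsum : ∑ i ∈ Finset.range (N - 2),
        ‖slopeVec z (fun j => nnFun θ (z j)) (i + 1 + 1) -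
          slopeVec z (fun j => nnFun θ (z j)) (i + 1)‖
      = ∑ i ∈ Finset.range (N - 2), ‖slopeVec x y (i + 1) - slopeVec x y i‖ := by
    refine Finset.sum_congr rfl fun i hi => ?_
    rw [Finset.mem_range] at hi
    have ha : slopeVec z (fun j => nnFun θ (z j)) (i + 1 + 1) = slopeVec x y (i + 1) :=
      hSsucc (i + 1) (by omega)
    have hb : slopeVec z (fun j => nnFun θ (z j)) (i + 1) = slopeVec x y i :=
      hSsucc i (by omega)
    rw [ha, hb]
  have h1 : slopeVec z (fun j => nnFun θ (z j)) 1 = slopeVec x y 0 := hSsucc 0 (by omega)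
  rw [hsum, h1] at key
  have hS0 : slopeVec x y 0 = slopeVec z (fun j => nnFun θ (z j)) 0 :=
    eq_of_norm_le_zero (by linarith)
  have e0 : z 0 = t := by simp [hzdef]
  have e1 : z 1 = x 0 := by simp [hzdef]
  have hS0' : slopeVec z (fun j => nnFun θ (z j)) 0 = (x 0 - t)⁻¹ • (y 0 - nnFun θ t) := by
    simp only [slopeVec, zero_add, e0, e1, hint 0 (by omega)]
  rw [hS0'] at hS0
  have hne : x 0 - t ≠ 0 := sub_ne_zero.2 (ne_of_gt (by linarith))
  rw [eq_comm, inv_smul_eq_iff₀ hne] at hS0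
  have hfin : nnFun θ t = y 0 - (x 0 - t) • slopeVec x y 0 := by
    rw [← hS0]; abel
  rw [hfin]
  module

lemma case_rightExt {T K N : ℕ} {x : ℕ → ℝ} {y : ℕ → EuclideanSpace ℝ (Fin T)} (hN : 2 ≤ N)
    (hx : ∀ i, i + 1 < N → x i < x (i + 1)) (θ : ReLUParams T K)
    (hint : Interpolates N x y θ)
    (hcost : cost θ ≤ ∑ i ∈ Finset.range (N - 2), ‖slopeVec x y (i + 1) - slopeVec x y i‖)
    {t : ℝ} (ht : x (N - 1) < t) :
    nnFun θ t = y (N - 1) + (t - x (N - 1)) • slopeVec x y (N - 2) := by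
  set z : ℕ → ℝ := fun i => if i < N then x i else t with hzdef
  have hz : ∀ i, i + 1 < N + 1 → z i < z (i + 1) := by
    intro i hi
    by_cases h : i + 1 < N
    · have e1 : z i = x i := if_pos (by omega)
      have e2 : z (i + 1) = x (i + 1) := if_pos h
      rw [e1, e2]; exact hx i h
    · have hiN : i = N - 1 := by omega
      have e1 : z i = x i := if_pos (by omega)
      have e2 : z (i + 1) = t := if_neg (by omega)
      rw [e1, e2, hiN]; exact ht
  have key := lower_bound (N + 1) z hz θ
  have hNr : N + 1 - 2 = N - 2 + 1 := by omega
  rw [hNr, Finset.sum_range_succ] at key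
  have hSi : ∀ i, i + 1 < N →
      slopeVec z (fun j => nnFun θ (z j)) i = slopeVec x y i := by
    intro i hi
    have e1 : z i = x i := if_pos (by omega)
    have e2 : z (i + 1) = x (i + 1) := if_pos hi
    simp only [slopeVec, e1, e2, hint (i + 1) hi, hint i (by omega)]
  have hsum : ∑ i ∈ Finset.range (N - 2),
        ‖slopeVec z (fun j => nnFun θ (z j)) (i + 1) -
          slopeVec z (fun j => nnFun θ (z j)) i‖
      = ∑ i ∈ Finset.range (N - 2), ‖slopeVec x y (i + 1) - slopeVec x y i‖ := by
    refine Finset.sum_congr rfl fun i hi => ?_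
    rw [Finset.mem_range] at hi
    rw [hSi (i + 1) (by omega), hSi i (by omega)]
  rw [hsum] at key
  have eN : N - 2 + 1 = N - 1 := by omega
  rw [eN] at key
  have hSlast : slopeVec z (fun j => nnFun θ (z j)) (N - 1)
      = (t - x (N - 1))⁻¹ • (nnFun θ t - y (N - 1)) := by
    have e1 : z (N - 1) = x (N - 1) := if_pos (by omega)
    have e2 : z (N - 1 + 1) = t := if_neg (by omega)
    simp only [slopeVec, e1, e2, hint (N - 1) (by omega)]
  have hS2 : slopeVec z (fun j => nnFun θ (z j)) (N - 2) = slopeVec x y (N - 2) :=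
    hSi (N - 2) (by omega)
  rw [hSlast, hS2] at key
  have hEq : (t - x (N - 1))⁻¹ • (nnFun θ t - y (N - 1)) = slopeVec x y (N - 2) :=
    eq_of_norm_le_zero (by linarith)
  have hne : t - x (N - 1) ≠ 0 := sub_ne_zero.2 (ne_of_gt ht)
  rw [inv_smul_eq_iff₀ hne] at hEq
  have hfin : nnFun θ t = (t - x (N - 1)) • slopeVec x y (N - 2) + y (N - 1) := by
    rw [← hEq]; abel
  rw [hfin]; abel


lemma interior_finish {T : ℕ} (u0 u1 g : EuclideanSpace ℝ (Fin T)) {x0 x1 t : ℝ}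
    (h0 : x0 < t) (h1 : t < x1)
    (hab : (t - x0)⁻¹ • (g - u0) = (x1 - t)⁻¹ • (u1 - g)) :
    g = u0 + (t - x0) • ((x1 - x0)⁻¹ • (u1 - u0)) := by
  have hne0 : t - x0 ≠ 0 := sub_ne_zero.2 (ne_of_gt h0)
  have hne1 : x1 - t ≠ 0 := sub_ne_zero.2 (ne_of_gt h1)
  have hne2 : x1 - x0 ≠ 0 := sub_ne_zero.2 (ne_of_gt (lt_trans h0 h1))
  have hg : g - u0 = (t - x0) • ((t - x0)⁻¹ • (g - u0)) := (smul_inv_smul₀ hne0 _).symm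
  have hu : u1 - g = (x1 - t) • ((t - x0)⁻¹ • (g - u0)) := by
    rw [hab, smul_inv_smul₀ hne1]
  have hsum : u1 - u0 = (x1 - x0) • ((t - x0)⁻¹ • (g - u0)) := by
    calc u1 - u0 = (g - u0) + (u1 - g) := by abel
      _ = (t - x0) • ((t - x0)⁻¹ • (g - u0)) + (x1 - t) • ((t - x0)⁻¹ • (g - u0)) := by
          rw [← hg, ← hu]
      _ = (x1 - x0) • ((t - x0)⁻¹ • (g - u0)) := by
          rw [← add_smul]; congr 1; ring
  have hσ : (x1 - x0)⁻¹ • (u1 - u0) = (t - x0)⁻¹ • (g - u0) := by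
    rw [hsum, inv_smul_smul₀ hne2]
  rw [hσ, ← hg]
  abel

lemma case_intLeft {T K N : ℕ} {x : ℕ → ℝ} {y : ℕ → EuclideanSpace ℝ (Fin T)} (hN : 2 ≤ N)
    (hx : ∀ i, i + 1 < N → x i < x (i + 1)) (θ : ReLUParams T K)
    (hint : Interpolates N x y θ)
    (hcost : cost θ ≤ ∑ i ∈ Finset.range (N - 2), ‖slopeVec x y (i + 1) - slopeVec x y i‖)
    {t : ℝ} (ht0 : x 0 < t) (ht1 : t < x 1) :
    nnFun θ t = y 0 + (t - x 0) • slopeVec x y 0 := by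
  have h01 : x 0 < x 1 := lt_trans ht0 ht1
  set z : ℕ → ℝ := fun i => if i = 0 then x 0 else if i = 1 then t else x (i - 1) with hzdef
  have e0 : z 0 = x 0 := by simp [hzdef]
  have e1 : z 1 = t := by simp [hzdef]
  have eS : ∀ m, z (m + 2) = x (m + 1) := by
    intro m
    simp only [hzdef]
    rw [if_neg (by omega), if_neg (by omega)]
    congr 1
  have e2 : z 2 = x 1 := eS 0
  have hz : ∀ i, i + 1 < N + 1 → z i < z (i + 1) := by
    intro i hi
    match i with
    | 0 => rw [e0, e1]; exact ht0
    | 1 =>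
      show z 1 < z 2
      rw [e1, e2]; exact ht1
    | m + 2 =>
      show z (m + 2) < z (m + 3)
      have ea : z (m + 3) = x (m + 2) := eS (m + 1)
      rw [eS m, ea]
      exact hx (m + 1) (by omega)
  have key := lower_bound (N + 1) z hz θ
  have hS0 : slopeVec z (fun j => nnFun θ (z j)) 0
      = (t - x 0)⁻¹ • (nnFun θ t - y 0) := by
    simp only [slopeVec, zero_add, e0, e1, hint 0 (by omega)]
  have hS1 : slopeVec z (fun j => nnFun θ (z j)) 1
      = (x 1 - t)⁻¹ • (y 1 - nnFun θ t) := by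
    have e2' : z (1 + 1) = x 1 := e2
    simp only [slopeVec, e1, e2', hint 1 (by omega)]
  have hab : (t - x 0)⁻¹ • (nnFun θ t - y 0) = (x 1 - t)⁻¹ • (y 1 - nnFun θ t) := by
    rcases Nat.lt_or_ge N 3 with hN2 | hN3
    · -- N = 2
      have hN2' : N = 2 := by omega
      subst hN2'
      rw [show (2 : ℕ) + 1 - 2 = 1 from rfl, Finset.sum_range_one] at key
      simp only [zero_add] at key
      rw [hS1, hS0] at key
      have hc0 : cost θ ≤ 0 := by simpa using hcost
      exact (eq_of_norm_le_zero (by linarith)).symm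
    · -- N ≥ 3
      rw [show N + 1 - 2 = N - 3 + 1 + 1 from by omega] at key
      simp only [Finset.sum_range_succ', Nat.reduceAdd, zero_add] at key
      have hSm : ∀ i, i + 2 < N → slopeVec z (fun j => nnFun θ (z j)) (i + 2)
          = slopeVec x y (i + 1) := by
        intro i hi
        have ea : z (i + 2) = x (i + 1) := eS i
        have eb : z (i + 2 + 1) = x (i + 2) := eS (i + 1)
        simp only [slopeVec, ea, eb, hint (i + 1) (by omega), hint (i + 2) hi]
      have hsum : ∑ i ∈ Finset.range (N - 3),
            ‖slopeVec z (fun j => nnFun θ (z j)) (i + 1 + 1 + 1) -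
              slopeVec z (fun j => nnFun θ (z j)) (i + 1 + 1)‖
          = ∑ i ∈ Finset.range (N - 3),
              ‖slopeVec x y (i + 1 + 1) - slopeVec x y (i + 1)‖ := by
        refine Finset.sum_congr rfl fun i hi => ?_
        rw [Finset.mem_range] at hi
        have ha : slopeVec z (fun j => nnFun θ (z j)) (i + 1 + 1 + 1)
            = slopeVec x y (i + 1 + 1) := hSm (i + 1) (by omega)
        have hb : slopeVec z (fun j => nnFun θ (z j)) (i + 1 + 1)
            = slopeVec x y (i + 1) := hSm i (by omega)
        rw [ha, hb]
      have hS2 : slopeVec z (fun j => nnFun θ (z j)) 2 = slopeVec x y 1 := hSm 0 (by omega)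
      rw [hsum, hS2, hS1, hS0] at key
      have hV : ∑ i ∈ Finset.range (N - 2), ‖slopeVec x y (i + 1) - slopeVec x y i‖
          = ∑ i ∈ Finset.range (N - 3), ‖slopeVec x y (i + 1 + 1) - slopeVec x y (i + 1)‖
            + ‖slopeVec x y 1 - slopeVec x y 0‖ := by
        rw [show N - 2 = N - 3 + 1 from by omega, Finset.sum_range_succ']
      rw [hV] at hcost
      have hta : (t - x 0) • ((t - x 0)⁻¹ • (nnFun θ t - y 0)) = nnFun θ t - y 0 :=
        smul_inv_smul₀ (sub_ne_zero.2 (ne_of_gt ht0)) _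
      have htb : (x 1 - t) • ((x 1 - t)⁻¹ • (y 1 - nnFun θ t)) = y 1 - nnFun θ t :=
        smul_inv_smul₀ (sub_ne_zero.2 (ne_of_gt ht1)) _
      have hs0 : (x 1 - x 0) • slopeVec x y 0 = y 1 - y 0 := by
        have := slope_step x y 0 (hx 0 (by omega))
        simpa using this
      have hcomb : (x 1 - x 0) • slopeVec x y 0
          = (t - x 0) • ((t - x 0)⁻¹ • (nnFun θ t - y 0))
            + (x 1 - t) • ((x 1 - t)⁻¹ • (y 1 - nnFun θ t)) := by
        rw [hta, htb, hs0]; abel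
      have hscaled : (x 1 - x 0) • ((x 1 - t)⁻¹ • (y 1 - nnFun θ t) - slopeVec x y 0)
          = (t - x 0) • ((x 1 - t)⁻¹ • (y 1 - nnFun θ t)
              - (t - x 0)⁻¹ • (nnFun θ t - y 0)) := by
        rw [smul_sub, hcomb]; module
      have hnorm1 : (x 1 - x 0) * ‖(x 1 - t)⁻¹ • (y 1 - nnFun θ t) - slopeVec x y 0‖
          = (t - x 0) * ‖(x 1 - t)⁻¹ • (y 1 - nnFun θ t)
              - (t - x 0)⁻¹ • (nnFun θ t - y 0)‖ := by
        have hc := congrArg (fun v : EuclideanSpace ℝ (Fin T) => ‖v‖) hscaled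
        simpa [norm_smul, Real.norm_eq_abs,
          abs_of_pos (show (0:ℝ) < x 1 - x 0 by linarith),
          abs_of_pos (show (0:ℝ) < t - x 0 by linarith)] using hc
      have tri : ‖slopeVec x y 1 - slopeVec x y 0‖
          ≤ ‖slopeVec x y 1 - (x 1 - t)⁻¹ • (y 1 - nnFun θ t)‖
            + ‖(x 1 - t)⁻¹ • (y 1 - nnFun θ t) - slopeVec x y 0‖ := by
        have h := norm_add_le (slopeVec x y 1 - (x 1 - t)⁻¹ • (y 1 - nnFun θ t))
          ((x 1 - t)⁻¹ • (y 1 - nnFun θ t) - slopeVec x y 0)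
        have e : slopeVec x y 1 - (x 1 - t)⁻¹ • (y 1 - nnFun θ t)
            + ((x 1 - t)⁻¹ • (y 1 - nnFun θ t) - slopeVec x y 0)
            = slopeVec x y 1 - slopeVec x y 0 := by abel
        rw [e] at h
        exact h
      have hmain : ‖(x 1 - t)⁻¹ • (y 1 - nnFun θ t) - (t - x 0)⁻¹ • (nnFun θ t - y 0)‖
          ≤ ‖(x 1 - t)⁻¹ • (y 1 - nnFun θ t) - slopeVec x y 0‖ := by linarith
      have h5 : (x 1 - x 0) * ‖(x 1 - t)⁻¹ • (y 1 - nnFun θ t)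
            - (t - x 0)⁻¹ • (nnFun θ t - y 0)‖
          ≤ (t - x 0) * ‖(x 1 - t)⁻¹ • (y 1 - nnFun θ t)
            - (t - x 0)⁻¹ • (nnFun θ t - y 0)‖ := by
        calc (x 1 - x 0) * ‖(x 1 - t)⁻¹ • (y 1 - nnFun θ t)
              - (t - x 0)⁻¹ • (nnFun θ t - y 0)‖
            ≤ (x 1 - x 0) * ‖(x 1 - t)⁻¹ • (y 1 - nnFun θ t) - slopeVec x y 0‖ := by
              apply mul_le_mul_of_nonneg_left hmain
              linarith
          _ = _ := hnorm1
      have hC0 : ‖(x 1 - t)⁻¹ • (y 1 - nnFun θ t) - (t - x 0)⁻¹ • (nnFun θ t - y 0)‖ ≤ 0 := by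
        by_contra hcon
        push_neg at hcon
        nlinarith [mul_pos (show (0:ℝ) < x 1 - t by linarith) hcon]
      exact (eq_of_norm_le_zero hC0).symm
  exact interior_finish (y 0) (y 1) (nnFun θ t) ht0 ht1 hab

lemma case_intRight {T K N : ℕ} {x : ℕ → ℝ} {y : ℕ → EuclideanSpace ℝ (Fin T)} (hN3 : 3 ≤ N)
    (hx : ∀ i, i + 1 < N → x i < x (i + 1)) (θ : ReLUParams T K)
    (hint : Interpolates N x y θ)
    (hcost : cost θ ≤ ∑ i ∈ Finset.range (N - 2), ‖slopeVec x y (i + 1) - slopeVec x y i‖)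
    {t : ℝ} (ht0 : x (N - 2) < t) (ht1 : t < x (N - 1)) :
    nnFun θ t = y (N - 2) + (t - x (N - 2)) • slopeVec x y (N - 2) := by
  set z : ℕ → ℝ := fun i => if i < N - 1 then x i else if i = N - 1 then t else x (N - 1)
    with hzdef
  have hz : ∀ i, i + 1 < N + 1 → z i < z (i + 1) := by
    intro i hi
    rcases lt_trichotomy (i + 1) (N - 1) with h | h | h
    · have ea : z i = x i := if_pos (by omega)
      have eb : z (i + 1) = x (i + 1) := if_pos h
      rw [ea, eb]; exact hx i (by omega)
    · have ea : z i = x i := if_pos (by omega)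
      have eb : z (i + 1) = t := by
        simp only [hzdef]; rw [if_neg (by omega), if_pos h]
      rw [ea, eb, show i = N - 2 from by omega]
      exact ht0
    · have hiN : i = N - 1 := by omega
      subst hiN
      have ea : z (N - 1) = t := by
        simp only [hzdef]; rw [if_neg (by omega)]; simp
      have eb : z (N - 1 + 1) = x (N - 1) := by
        simp only [hzdef]; rw [if_neg (by omega), if_neg (by omega)]
      rw [ea, eb]; exact ht1
  have key := lower_bound (N + 1) z hz θ
  rw [show N + 1 - 2 = N - 3 + 1 + 1 from by omega, Finset.sum_range_succ,
    Finset.sum_range_succ, show N - 3 + 1 = N - 2 from by omega,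
    show N - 2 + 1 = N - 1 from by omega] at key
  have hSi : ∀ i, i + 1 < N - 1 →
      slopeVec z (fun j => nnFun θ (z j)) i = slopeVec x y i := by
    intro i hi
    have ea : z i = x i := if_pos (by omega)
    have eb : z (i + 1) = x (i + 1) := if_pos hi
    simp only [slopeVec, ea, eb, hint (i + 1) (by omega), hint i (by omega)]
  have hSa : slopeVec z (fun j => nnFun θ (z j)) (N - 2)
      = (t - x (N - 2))⁻¹ • (nnFun θ t - y (N - 2)) := by
    have ea : z (N - 2) = x (N - 2) := if_pos (by omega)
    have eb : z (N - 2 + 1) = t := by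
      simp only [hzdef]; rw [if_neg (by omega), if_pos (by omega)]
    simp only [slopeVec, ea, eb, hint (N - 2) (by omega)]
  have hSb : slopeVec z (fun j => nnFun θ (z j)) (N - 1)
      = (x (N - 1) - t)⁻¹ • (y (N - 1) - nnFun θ t) := by
    have ea : z (N - 1) = t := by
      simp only [hzdef]; rw [if_neg (by omega)]; simp
    have eb : z (N - 1 + 1) = x (N - 1) := by
      simp only [hzdef]; rw [if_neg (by omega), if_neg (by omega)]
    simp only [slopeVec, ea, eb, hint (N - 1) (by omega)]
  have hsum : ∑ i ∈ Finset.range (N - 3),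
        ‖slopeVec z (fun j => nnFun θ (z j)) (i + 1) -
          slopeVec z (fun j => nnFun θ (z j)) i‖
      = ∑ i ∈ Finset.range (N - 3), ‖slopeVec x y (i + 1) - slopeVec x y i‖ := by
    refine Finset.sum_congr rfl fun i hi => ?_
    rw [Finset.mem_range] at hi
    rw [hSi (i + 1) (by omega), hSi i (by omega)]
  have hS3 : slopeVec z (fun j => nnFun θ (z j)) (N - 3) = slopeVec x y (N - 3) :=
    hSi (N - 3) (by omega)
  rw [hsum, hS3, hSa, hSb] at key
  have hV : ∑ i ∈ Finset.range (N - 2), ‖slopeVec x y (i + 1) - slopeVec x y i‖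
      = ∑ i ∈ Finset.range (N - 3), ‖slopeVec x y (i + 1) - slopeVec x y i‖
        + ‖slopeVec x y (N - 2) - slopeVec x y (N - 3)‖ := by
    rw [show N - 2 = N - 3 + 1 from by omega, Finset.sum_range_succ,
      show N - 3 + 1 = N - 2 from by omega]
  rw [hV] at hcost
  have hta : (t - x (N - 2)) • ((t - x (N - 2))⁻¹ • (nnFun θ t - y (N - 2)))
      = nnFun θ t - y (N - 2) := smul_inv_smul₀ (sub_ne_zero.2 (ne_of_gt ht0)) _
  have htb : (x (N - 1) - t) • ((x (N - 1) - t)⁻¹ • (y (N - 1) - nnFun θ t))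
      = y (N - 1) - nnFun θ t := smul_inv_smul₀ (sub_ne_zero.2 (ne_of_gt ht1)) _
  have hs0 : (x (N - 1) - x (N - 2)) • slopeVec x y (N - 2) = y (N - 1) - y (N - 2) := by
    have h := slope_step x y (N - 2) (hx (N - 2) (by omega))
    rw [show N - 2 + 1 = N - 1 from by omega] at h
    exact h
  have hcomb : (x (N - 1) - x (N - 2)) • slopeVec x y (N - 2)
      = (t - x (N - 2)) • ((t - x (N - 2))⁻¹ • (nnFun θ t - y (N - 2)))
        + (x (N - 1) - t) • ((x (N - 1) - t)⁻¹ • (y (N - 1) - nnFun θ t)) := by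
    rw [hta, htb, hs0]; abel
  have hscaled : (x (N - 1) - x (N - 2)) •
        (slopeVec x y (N - 2) - (t - x (N - 2))⁻¹ • (nnFun θ t - y (N - 2)))
      = (x (N - 1) - t) • ((x (N - 1) - t)⁻¹ • (y (N - 1) - nnFun θ t)
          - (t - x (N - 2))⁻¹ • (nnFun θ t - y (N - 2))) := by
    rw [smul_sub, hcomb]; module
  have hnorm1 : (x (N - 1) - x (N - 2)) *
        ‖slopeVec x y (N - 2) - (t - x (N - 2))⁻¹ • (nnFun θ t - y (N - 2))‖
      = (x (N - 1) - t) * ‖(x (N - 1) - t)⁻¹ • (y (N - 1) - nnFun θ t)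
          - (t - x (N - 2))⁻¹ • (nnFun θ t - y (N - 2))‖ := by
    have hc := congrArg (fun v : EuclideanSpace ℝ (Fin T) => ‖v‖) hscaled
    simpa [norm_smul, Real.norm_eq_abs,
      abs_of_pos (show (0:ℝ) < x (N - 1) - x (N - 2) by linarith),
      abs_of_pos (show (0:ℝ) < x (N - 1) - t by linarith)] using hc
  have tri : ‖slopeVec x y (N - 2) - slopeVec x y (N - 3)‖
      ≤ ‖(t - x (N - 2))⁻¹ • (nnFun θ t - y (N - 2)) - slopeVec x y (N - 3)‖
        + ‖slopeVec x y (N - 2) - (t - x (N - 2))⁻¹ • (nnFun θ t - y (N - 2))‖ := by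
    have h := norm_add_le
      (slopeVec x y (N - 2) - (t - x (N - 2))⁻¹ • (nnFun θ t - y (N - 2)))
      ((t - x (N - 2))⁻¹ • (nnFun θ t - y (N - 2)) - slopeVec x y (N - 3))
    have e : slopeVec x y (N - 2) - (t - x (N - 2))⁻¹ • (nnFun θ t - y (N - 2))
        + ((t - x (N - 2))⁻¹ • (nnFun θ t - y (N - 2)) - slopeVec x y (N - 3))
        = slopeVec x y (N - 2) - slopeVec x y (N - 3) := by abel
    rw [e] at h
    linarith
  have hmain : ‖(x (N - 1) - t)⁻¹ • (y (N - 1) - nnFun θ t)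
        - (t - x (N - 2))⁻¹ • (nnFun θ t - y (N - 2))‖
      ≤ ‖slopeVec x y (N - 2) - (t - x (N - 2))⁻¹ • (nnFun θ t - y (N - 2))‖ := by
    linarith
  have h5 : (x (N - 1) - x (N - 2)) * ‖(x (N - 1) - t)⁻¹ • (y (N - 1) - nnFun θ t)
        - (t - x (N - 2))⁻¹ • (nnFun θ t - y (N - 2))‖
      ≤ (x (N - 1) - t) * ‖(x (N - 1) - t)⁻¹ • (y (N - 1) - nnFun θ t)
        - (t - x (N - 2))⁻¹ • (nnFun θ t - y (N - 2))‖ := by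
    calc (x (N - 1) - x (N - 2)) * ‖(x (N - 1) - t)⁻¹ • (y (N - 1) - nnFun θ t)
          - (t - x (N - 2))⁻¹ • (nnFun θ t - y (N - 2))‖
        ≤ (x (N - 1) - x (N - 2)) *
            ‖slopeVec x y (N - 2) - (t - x (N - 2))⁻¹ • (nnFun θ t - y (N - 2))‖ := by
          apply mul_le_mul_of_nonneg_left hmain
          linarith
      _ = _ := hnorm1
  have hC0 : ‖(x (N - 1) - t)⁻¹ • (y (N - 1) - nnFun θ t)
      - (t - x (N - 2))⁻¹ • (nnFun θ t - y (N - 2))‖ ≤ 0 := by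
    by_contra hcon
    push_neg at hcon
    nlinarith [mul_pos (show (0:ℝ) < t - x (N - 2) by linarith) hcon]
  have hab : (t - x (N - 2))⁻¹ • (nnFun θ t - y (N - 2))
      = (x (N - 1) - t)⁻¹ • (y (N - 1) - nnFun θ t) := (eq_of_norm_le_zero hC0).symm
  have hsl : slopeVec x y (N - 2)
      = (x (N - 1) - x (N - 2))⁻¹ • (y (N - 1) - y (N - 2)) := by
    rw [slopeVec, show N - 2 + 1 = N - 1 from by omega]
  rw [hsl]
  exact interior_finish (y (N - 2)) (y (N - 1)) (nnFun θ t) ht0 ht1 hab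


/-- Every parameter set attaining the minimum of problem (P)
agrees with the connect-the-dots interpolant `f_D` on `(−∞, x₂]` and on
`[x_{N−1}, ∞)` (0-indexed: on `(−∞, x 1]` and on `[x (N−2), ∞)`). -/
theorem optimal_agrees_ctd_on_tails {T K N : ℕ} (hT : 1 ≤ T) (hN : 2 ≤ N)
    (hK : N - 2 ≤ K)
    (x : ℕ → ℝ) (y : ℕ → EuclideanSpace ℝ (Fin T))
    (hx : ∀ i, i + 1 < N → x i < x (i + 1)) :
    ∀ θ : ReLUParams T K, IsMinimizer N x y θ →
      ∀ t : ℝ, (t ≤ x 1 ∨ x (N - 2) ≤ t) → nnFun θ t = ctd N x y t := by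
  rintro θ ⟨hint, hopt⟩ t ht
  have hθ' : Interpolates N x y (ctdParams (K := K) N x y) := by
    intro i hi
    rw [ctdParams_fun hN hK x y, ctd_interp hN x y hx i hi]
  have hcost : cost θ ≤ ∑ i ∈ Finset.range (N - 2), ‖slopeVec x y (i + 1) - slopeVec x y i‖ :=
    le_trans (hopt _ hθ') (le_of_eq (ctdParams_cost hK x y))
  rcases ht with hL | hR
  · -- t ≤ x 1
    rcases lt_trichotomy t (x 0) with h | h | h
    · rw [ctd_left hN x y hx hL]
      exact case_leftExt hN hx θ hint hcost h
    · rw [h, hint 0 (by omega), ctd_interp hN x y hx 0 (by omega)]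
    · rcases hL.eq_or_lt with he | hlt
      · rw [he, hint 1 (by omega), ctd_interp hN x y hx 1 (by omega)]
      · rw [ctd_left hN x y hx hL]
        exact case_intLeft hN hx θ hint hcost h hlt
  · -- x (N - 2) ≤ t
    rcases hR.eq_or_lt with he | hlt
    · rw [← he, hint (N - 2) (by omega), ctd_interp hN x y hx (N - 2) (by omega)]
    · rcases lt_trichotomy t (x (N - 1)) with h | h | h
      · -- interior
        by_cases hN3 : 3 ≤ N
        · rw [ctd_right hN x y hx hR]
          exact case_intRight hN3 hx θ hint hcost hlt h
        · have hN2 : N = 2 := by omega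
          subst hN2
          rw [ctd_left (by omega) x y hx (le_of_lt h)]
          exact case_intLeft (by omega) hx θ hint hcost hlt h
      · rw [h, hint (N - 1) (by omega), ctd_interp hN x y hx (N - 1) (by omega)]
      · rw [ctd_right hN x y hx hR]
        have hg := case_rightExt hN hx θ hint hcost h
        rw [hg]
        have hs : (x (N - 1) - x (N - 2)) • slopeVec x y (N - 2) = y (N - 1) - y (N - 2) := by
          have hh := slope_step x y (N - 2) (hx (N - 2) (by omega))
          rw [show N - 2 + 1 = N - 1 from by omega] at hh
          exact hh
        have : y (N - 1) = y (N - 2) + (x (N - 1) - x (N - 2)) • slopeVec x y (N - 2) := by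
          rw [hs]; abel
        rw [this]
        module


end
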